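/- Let F be continuous on [a,b] with least concave majorant F̂, let M = max F, and let c1 be the smallest point at which F attains M. Suppose R = [r1,r2] ⊆ [a,c1] is an interval on which F is strictly concave and increasing, and let m2 ∈ R satisfy F̂(m2) = F(m2). Let s < r1 satisfy F(s) = max{F(x) : x ∈ [a,r1]}, and suppose m1 < r1 is such that (m1,m2) is a connected component of [a,b] \ Z_F, where Z_F = {x : F̂(x) = F(x)}. Then m1 ∈ [a,s]. -/

import Mathlib

/-!
The majorant `L` is concave and touches `F` at the left end `m1` of the component. If we had
`s < m1`, then `L s ≥ F s ≥ F m1 = L m1` and concavity would force `L c1 ≤ L m1` at the point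
`c1 > m1`; since `L c1 ≥ F c1 = M`, `m1` would be a maximiser of `F` lying left of `c1`.
-/

open Set

/-- The least concave majorant of `F` on `[a, b]`. -/
noncomputable def leastConcaveMajorant (a b : ℝ) (F : ℝ → ℝ) (x : ℝ) : ℝ :=
  sInf {y : ℝ | ∃ G : ℝ → ℝ, ConcaveOn ℝ (Set.Icc a b) G ∧
    (∀ z ∈ Set.Icc a b, F z ≤ G z) ∧ y = G x}

section ConnectedComponent

variable {α : Type*} [ConditionallyCompleteLinearOrder α] [TopologicalSpace α] [OrderTopology α]
  [DenselyOrdered α]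

theorem left_notMem_of_Ioo_eq_connectedComponentIn {U : Set α} {m₁ m₂ t : α} (ht : t ∈ U)
    (h : Ioo m₁ m₂ = connectedComponentIn U t) : m₁ ∉ U := by
  intro hm₁
  have htm : t ∈ Ioo m₁ m₂ := h ▸ mem_connectedComponentIn ht
  have hlt : m₁ < m₂ := htm.1.trans htm.2
  have hIco : Ico m₁ m₂ ⊆ U :=
    Ioo_insert_left hlt ▸ insert_subset hm₁ (h ▸ connectedComponentIn_subset U t)
  have hcomp := isPreconnected_Ico.subset_connectedComponentIn (Ioo_subset_Ico_self htm) hIco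
  exact (h ▸ hcomp) (left_mem_Ico.2 hlt) |>.1.false

end ConnectedComponent

section LeastConcaveMajorant

variable {a b : ℝ} {F : ℝ → ℝ}

theorem leastConcaveMajorant_le {G : ℝ → ℝ} (hG : ConcaveOn ℝ (Icc a b) G)
    (hFG : ∀ z ∈ Icc a b, F z ≤ G z) {x : ℝ} (hx : x ∈ Icc a b) :
    leastConcaveMajorant a b F x ≤ G x :=
  csInf_le ⟨F x, by rintro _ ⟨G, -, hFG, rfl⟩; exact hFG x hx⟩ ⟨G, hG, hFG, rfl⟩

theorem le_leastConcaveMajorant_of_forall_le (hF : BddAbove (F '' Icc a b)) {x c : ℝ}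
    (h : ∀ G : ℝ → ℝ, ConcaveOn ℝ (Icc a b) G → (∀ z ∈ Icc a b, F z ≤ G z) → c ≤ G x) :
    c ≤ leastConcaveMajorant a b F x := by
  obtain ⟨M, hM⟩ := hF
  refine le_csInf ⟨M, fun _ => M, concaveOn_const M (convex_Icc a b),
    fun z hz => hM (mem_image_of_mem F hz), rfl⟩ ?_
  rintro _ ⟨G, hG, hFG, rfl⟩
  exact h G hG hFG

theorem le_leastConcaveMajorant (hF : BddAbove (F '' Icc a b)) {x : ℝ} (hx : x ∈ Icc a b) :
    F x ≤ leastConcaveMajorant a b F x :=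
  le_leastConcaveMajorant_of_forall_le hF fun _ _ hFG => hFG x hx

theorem concaveOn_leastConcaveMajorant (hF : BddAbove (F '' Icc a b)) :
    ConcaveOn ℝ (Icc a b) (leastConcaveMajorant a b F) := by
  refine ⟨convex_Icc a b, fun x hx y hy p q hp hq hpq => ?_⟩
  refine le_leastConcaveMajorant_of_forall_le hF fun G hG hFG => ?_
  calc p • leastConcaveMajorant a b F x + q • leastConcaveMajorant a b F y
      ≤ p • G x + q • G y := by
        gcongr
        exacts [leastConcaveMajorant_le hG hFG hx, leastConcaveMajorant_le hG hFG hy]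
    _ ≤ G (p • x + q • y) := hG.2 hx hy hp hq hpq

theorem leastConcaveMajorant_le_of_eq_of_le_left (hF : BddAbove (F '' Icc a b))
    {x y z : ℝ} (hx : x ∈ Icc a b) (hz : z ∈ Icc a b) (hxy : x < y) (hyz : y ≤ z)
    (hy : leastConcaveMajorant a b F y = F y) (hFyx : F y ≤ F x) :
    leastConcaveMajorant a b F z ≤ F y :=
  hy ▸ (concaveOn_leastConcaveMajorant hF).right_le_of_le_left'' hx hz hxy hyz
    (hy ▸ hFyx.trans (le_leastConcaveMajorant hF hx))

end LeastConcaveMajorant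

theorem stmt13_general (a b : ℝ) (F : ℝ → ℝ)
    (Z : Set ℝ)
    (hZ : Z = {x ∈ Set.Icc a b | leastConcaveMajorant a b F x = F x})
    (M : ℝ) (hM : ∀ x ∈ Set.Icc a b, F x ≤ M)
    (c1 : ℝ) (hc1 : c1 = sInf {x ∈ Set.Icc a b | F x = M})
    (hc1mem : c1 ∈ Set.Icc a b) (hc1max : F c1 = M)
    (r1 r2 : ℝ) (hr12 : r1 < r2) (hR : Set.Icc r1 r2 ⊆ Set.Icc a c1)
    (m2 : ℝ)
    (s : ℝ)
    (hsmax : s ∈ Set.Icc a r1 ∧ ∀ x ∈ Set.Icc a r1, F x ≤ F s)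
    (m1 : ℝ) (hm1 : m1 < r1) (t : ℝ) (ht : t ∈ Set.Icc a b \ Z)
    (hcomp : Set.Ioo m1 m2 = connectedComponentIn (Set.Icc a b \ Z) t) :
    m1 ∈ Set.Icc a s := by
  have hbdd : BddAbove (F '' Icc a b) := ⟨M, forall_mem_image.2 hM⟩
  have htm : t ∈ Ioo m1 m2 := hcomp ▸ mem_connectedComponentIn ht
  have hm12 : m1 < m2 := htm.1.trans htm.2
  have hsub : Ioo m1 m2 ⊆ Icc a b := hcomp ▸ (connectedComponentIn_subset _ _).trans sdiff_subset
  have hm1mem : m1 ∈ Icc a b := isClosed_Icc.closure_subset_iff.2 hsub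
    (closure_Ioo hm12.ne ▸ left_mem_Icc.2 hm12.le)
  have hr1c1 : r1 ≤ c1 := (hR ⟨le_rfl, hr12.le⟩).2
  have hm1Z : leastConcaveMajorant a b F m1 = F m1 := by
    by_contra hne
    exact left_notMem_of_Ioo_eq_connectedComponentIn ht hcomp ⟨hm1mem, by simp [hZ, hne]⟩
  refine ⟨hm1mem.1, le_of_not_gt fun hsm1 => ?_⟩
  have hsmem : s ∈ Icc a b := ⟨hsmax.1.1, hsmax.1.2.trans (hr1c1.trans hc1mem.2)⟩
  have hMm1 : M ≤ F m1 := hc1max ▸ (le_leastConcaveMajorant hbdd hc1mem).trans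
    (leastConcaveMajorant_le_of_eq_of_le_left hbdd hsmem hc1mem hsm1 (hm1.trans_le hr1c1).le
      hm1Z (hsmax.2 m1 ⟨hm1mem.1, hm1.le⟩))
  have hc1m1 : c1 ≤ m1 :=
    hc1 ▸ csInf_le ⟨a, fun x hx => hx.1.1⟩ ⟨hm1mem, le_antisymm (hM m1 hm1mem) hMm1⟩
  exact absurd (hm1.trans_le hr1c1) hc1m1.not_gt

theorem stmt13 (a b : ℝ) (hab : a < b) (F : ℝ → ℝ)
    (hF : ContinuousOn F (Set.Icc a b))
    (Z : Set ℝ)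
    (hZ : Z = {x ∈ Set.Icc a b | leastConcaveMajorant a b F x = F x})
    (M : ℝ) (hM : ∀ x ∈ Set.Icc a b, F x ≤ M)
    (c1 : ℝ) (hc1 : c1 = sInf {x ∈ Set.Icc a b | F x = M})
    (hc1mem : c1 ∈ Set.Icc a b) (hc1max : F c1 = M)
    (r1 r2 : ℝ) (hr12 : r1 < r2) (hR : Set.Icc r1 r2 ⊆ Set.Icc a c1)
    (hconc : StrictConcaveOn ℝ (Set.Icc r1 r2) F)
    (hmono : StrictMonoOn F (Set.Icc r1 r2))
    (m2 : ℝ) (hm2R : m2 ∈ Set.Icc r1 r2)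
    (hm2 : leastConcaveMajorant a b F m2 = F m2)
    (s : ℝ) (hs : s < r1)
    (hsmax : s ∈ Set.Icc a r1 ∧ ∀ x ∈ Set.Icc a r1, F x ≤ F s)
    (m1 : ℝ) (hm1 : m1 < r1) (t : ℝ) (ht : t ∈ Set.Icc a b \ Z)
    (hcomp : Set.Ioo m1 m2 = connectedComponentIn (Set.Icc a b \ Z) t) :
    m1 ∈ Set.Icc a s :=
  stmt13_general a b F Z hZ M hM c1 hc1 hc1mem hc1max r1 r2 hr12 hR m2 s hsmax m1 hm1 t ht hcomp
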